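/- arXiv:1904.12339 — 4 statements merged into one kernel-verified Lean document; each statement's English description precedes it below -/
import Mathlib

section
/- There is no constant λ ∈ ℝ such that r(a + r cos t) sin² t - (r² + (a + r cos t)² - λ r² (a + r cos t)²) cos t = 0 holds for all t ∈ ℝ, given a > r > 0. -/
/-- Given `a > r > 0`, there is no constant `λ ∈ ℝ` such that
`rγ sin²t - (r² + γ² - λ r² γ²) cos t = 0` for all `t`, where `γ = a + r cos t`. -/
theorem anchor_ring_no_constant_lambda11 (a r : ℝ) (hr : 0 < r) (har : r < a) :
    ¬ ∃ l : ℝ, ∀ t : ℝ,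
      r * (a + r * Real.cos t) * Real.sin t ^ 2
        - (r ^ 2 + (a + r * Real.cos t) ^ 2 - l * r ^ 2 * (a + r * Real.cos t) ^ 2)
          * Real.cos t = 0 := by
  rintro ⟨l, h⟩
  have := h (Real.pi / 2)
  simp [Real.cos_pi_div_two, Real.sin_pi_div_two] at this
  rcases this with h1 | h2
  · exact hr.ne' h1
  · nlinarith
end

section
/- For the anchor ring of radii a > r > 0, there exists no matrix Λ ∈ ℝ^{3×3} such that Δn = Λn holds identically, where n is the Gauss map and Δ the Laplace–Beltrami operator of the first fundamental form. -/
/-!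
Only the third coordinate `n₃ = -sin t` is needed. It does not depend on `φ`, and
`Δn₃ = -sin t · (cos t / (r γ) + 1 / r²)`. Comparing with `Σⱼ Λ₂ⱼ nⱼ` at `t = 0` forces
`Λ₂₀ = 0`, at `t = π/2` forces `Λ₂₂ = 1 / r²`, and then at `t = π/3` what is left is
`cos t / (r γ) = 0` with `cos t = 1/2` and `γ = a + r/2 ≠ 0`.
-/

open Real

noncomputable def anchorRingLaplacian (a r : ℝ) (f : ℝ → ℝ → ℝ) (t φ : ℝ) : ℝ :=
  -(1 / (a + r * cos t) ^ 2) * iteratedDeriv 2 (fun ψ => f t ψ) φ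
    + (sin t / (r * (a + r * cos t))) * deriv (fun s => f s φ) t
    - (1 / r ^ 2) * iteratedDeriv 2 (fun s => f s φ) t

lemma iteratedDeriv_two_neg_sin (t : ℝ) : iteratedDeriv 2 (fun s => -sin s) t = sin t := by
  simp [iteratedDeriv_succ]

lemma anchorRingLaplacian_neg_sin (a r t φ : ℝ) :
    anchorRingLaplacian a r (fun s _ => -sin s) t φ
      = -sin t * (cos t / (r * (a + r * cos t)) + 1 / r ^ 2) := by
  simp only [anchorRingLaplacian, iteratedDeriv_const, two_ne_zero, if_false,
    iteratedDeriv_two_neg_sin, deriv.fun_neg, Real.deriv_sin]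
  ring

lemma not_exists_laplacian_neg_sin_eq_gauss_combination {a r : ℝ} (hr : r ≠ 0)
    (ha : 2 * a + r ≠ 0) :
    ¬ ∃ c : Fin 3 → ℝ, ∀ t φ : ℝ, -sin t * (cos t / (r * (a + r * cos t)) + 1 / r ^ 2)
      = c 0 * (-cos t * cos φ) + c 1 * (-cos t * sin φ) + c 2 * (-sin t) := by
  rintro ⟨c, hc⟩
  have hc₀ : c 0 = 0 := by simpa using (hc 0 0).symm
  have hc₂ : c 2 = 1 / r ^ 2 := by simpa using (hc (π / 2) 0).symm
  have h := hc (π / 3) 0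
  rw [hc₀, hc₂, sin_pi_div_three, cos_pi_div_three, sin_zero, cos_zero] at h
  have hγ : r * (a + r * (1 / 2)) ≠ 0 := mul_ne_zero hr (by contrapose! ha; linarith)
  have hne : √3 / 2 * (1 / 2 / (r * (a + r * (1 / 2)))) ≠ 0 :=
    mul_ne_zero (by positivity) (div_ne_zero (by norm_num) hγ)
  exact hne (by linarith)

/-- For the anchor ring of radii `a > r > 0`, with Gauss map
`n(t,φ) = (-cos t cos φ, -cos t sin φ, -sin t)` and Laplace operator
`Δ = -(1/γ²)∂²/∂φ² + (sin t)/(rγ) ∂/∂t - (1/r²)∂²/∂t²` (`γ = a + r cos t`),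
there exists no matrix `Λ ∈ ℝ^{3×3}` with `Δn = Λn` identically. -/
theorem anchor_ring_not_coordinate_finite_type (a r : ℝ) (hr : 0 < r) (har : r < a)
    (n : Fin 3 → ℝ → ℝ → ℝ)
    (hn : n = ![fun t φ => -Real.cos t * Real.cos φ,
                fun t φ => -Real.cos t * Real.sin φ,
                fun t _ => -Real.sin t]) :
    ¬ ∃ Λ : Matrix (Fin 3) (Fin 3) ℝ, ∀ (i : Fin 3) (t φ : ℝ),
      -(1 / (a + r * Real.cos t) ^ 2) * iteratedDeriv 2 (fun ψ => n i t ψ) φ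
        + (Real.sin t / (r * (a + r * Real.cos t))) * deriv (fun s => n i s φ) t
        - (1 / r ^ 2) * iteratedDeriv 2 (fun s => n i s φ) t
      = ∑ j, Λ i j * n j t φ := by
  rintro ⟨Λ, hΛ⟩
  subst hn
  refine not_exists_laplacian_neg_sin_eq_gauss_combination hr.ne' (by linarith) ⟨Λ 2, fun t φ => ?_⟩
  have h₂ : anchorRingLaplacian a r (fun s _ => -sin s) t φ = _ := hΛ 2 t φ
  simpa [anchorRingLaplacian_neg_sin, Fin.sum_univ_three] using h₂
end

section
/- If real numbers λ₃₁, λ₃₂, λ₃₃ satisfy -(sin t)/r · (cos t/γ + 1/r) = -λ₃₁ cos t cos φ - λ₃₂ cos t sin φ - λ₃₃ sin t for all t, φ ∈ ℝ, where γ = a + r cos t with a > r > 0, then λ₃₁ = λ₃₂ = 0 and no real λ₃₃ can satisfy the remaining equation -r sin t cos t - γ sin t + λ₃₃ r² γ sin t = 0 for all t. -/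
/-- If `λ₃₁, λ₃₂, λ₃₃` satisfy
`-(sin t)/r · (cos t/γ + 1/r) = -λ₃₁ cos t cos φ - λ₃₂ cos t sin φ - λ₃₃ sin t`
for all `t, φ ∈ ℝ` (with `γ = a + r cos t`, `a > r > 0`), then `λ₃₁ = λ₃₂ = 0`,
and no real `λ₃₃` satisfies `-r sin t cos t - γ sin t + λ₃₃ r² γ sin t = 0` for all `t`. -/
theorem anchor_ring_third_row (a r : ℝ) (hr : 0 < r) (har : r < a)
    (l31 l32 l33 : ℝ)
    (H : ∀ t φ : ℝ,
      -(Real.sin t / r) * (Real.cos t / (a + r * Real.cos t) + 1 / r)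
        = -(l31 * (Real.cos t * Real.cos φ)) - l32 * (Real.cos t * Real.sin φ)
          - l33 * Real.sin t) :
    (l31 = 0 ∧ l32 = 0) ∧
      ¬ ∃ l : ℝ, ∀ t : ℝ,
        -(r * Real.sin t * Real.cos t) - (a + r * Real.cos t) * Real.sin t
          + l * r ^ 2 * (a + r * Real.cos t) * Real.sin t = 0 := by
  constructor
  · constructor
    · have h := H 0 0
      simp [Real.sin_zero, Real.cos_zero] at h
      linarith
    · have h := H 0 (Real.pi / 2)
      simp [Real.sin_zero, Real.cos_zero, Real.sin_pi_div_two, Real.cos_pi_div_two] at h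
      linarith
  · rintro ⟨l, hl⟩
    have h1 := hl (Real.pi / 2)
    simp [Real.sin_pi_div_two, Real.cos_pi_div_two] at h1
    -- h1 : -a + l * r^2 * a = 0
    have ha : (0:ℝ) < a := lt_trans hr har
    have hlr : l * r ^ 2 = 1 := by
      have : (l * r ^ 2 - 1) * a = 0 := by ring_nf; ring_nf at h1; linarith
      rcases mul_eq_zero.mp this with h | h
      · linarith
      · exact absurd h (ne_of_gt ha)
    have h2 := hl (Real.pi / 4)
    rw [Real.sin_pi_div_four, Real.cos_pi_div_four] at h2
    have hs : Real.sqrt 2 / 2 * (Real.sqrt 2 / 2) = 1/2 := by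
      rw [div_mul_div_comm, Real.mul_self_sqrt (by norm_num)]; norm_num
    rw [hlr, one_mul] at h2
    have hr2 : r * (Real.sqrt 2 / 2) * (Real.sqrt 2 / 2) = r / 2 := by
      rw [mul_assoc, hs]; ring
    linarith
end

section
/- Let f : ℝ → ℝ be given by f(t) = (r² + γ(t)²) cos t - r γ(t) sin² t with γ(t) = a + r cos t, a > r > 0. Then there is no constant λ ∈ ℝ with f(t) = λ r² γ(t)² cos t for all t ∈ ℝ. -/
/-- For `f(t) = (r² + γ(t)²) cos t - r γ(t) sin² t` with `γ(t) = a + r cos t` and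
`a > r > 0`, there is no constant `λ ∈ ℝ` with `f(t) = λ r² γ(t)² cos t` for all `t`. -/
theorem anchor_ring_no_constant_diagonal (a r : ℝ) (hr : 0 < r) (har : r < a) :
    ¬ ∃ l : ℝ, ∀ t : ℝ,
      (r ^ 2 + (a + r * Real.cos t) ^ 2) * Real.cos t
          - r * (a + r * Real.cos t) * Real.sin t ^ 2
        = l * r ^ 2 * (a + r * Real.cos t) ^ 2 * Real.cos t := by
  rintro ⟨l, h⟩
  have h0 := h 0
  have hp := h Real.pi
  simp [Real.cos_pi, Real.sin_pi] at h0 hp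
  have har' : 0 < a * r := mul_pos (hr.trans har) hr
  have key : l * r ^ 2 = 1 := by
    have : 4 * (a * r) * (l * r ^ 2) = 4 * (a * r) * 1 := by nlinarith
    have := mul_left_cancel₀ (by positivity : (4 : ℝ) * (a * r) ≠ 0) this
    linarith
  nlinarith [sq_nonneg r]
end
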